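/- Let (P,·,[−,−]) be a finite-dimensional Poisson algebra, r = Σᵢ xᵢ⊗yᵢ ∈ P⊗P, and define Δ_r, δ_r : P → P⊗P by Δ_r(p) = (id⊗𝔲(p) − 𝔲(p)⊗id)(r) and δ_r(p) = (id⊗ad(p) + ad(p)⊗id)(r). Let (B,∘_B,ω) be a finite-dimensional quadratic perm algebra and ν_ω : B → B⊗B the unique linear map with ω̂(ν_ω(b), c⊗d) = −ω(b, c∘_B d) for all c,d ∈ B, where ω̂(x⊗y, c⊗d) = ω(x,c)ω(y,d). Define ν, ϑ : P⊗B → (P⊗B)⊗(P⊗B) by ν(p⊗b) = Σ (p₍₁₎⊗b₁)⊗(p₍₂₎⊗b₂) where Δ_r(p) = Σ p₍₁₎⊗p₍₂₎ and ν_ω(b) = Σ b₁⊗b₂, and ϑ(p⊗b) = Σ (p₍₁₎⊗b₁)⊗(p₍₂₎⊗b₂) where δ_r(p) = Σ p₍₁₎⊗p₍₂₎ and ν_ω(b) = Σ b₁⊗b₂. Let {e_j} be a basis of B with ω-dual basis {f_j}, and r̂ = Σ_{i,j}(xᵢ⊗e_j)⊗(yᵢ⊗f_j). Then ν = ν_{r̂}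 and ϑ = ϑ_{r̂}, where ν_{r̂} and ϑ_{r̂} are the coboundary maps of the induced DPP algebra (P⊗B,∘,∗) associated with r̂; in particular the induced comultiplications are coboundary. -/

import Mathlib

open TensorProduct LinearMap

/-- The axioms of a dual pre-Poisson (DPP) algebra. -/
structure IsDPP {k A : Type*} [Field k] [AddCommGroup A] [Module k A]
    (c s : A →ₗ[k] A →ₗ[k] A) : Prop where
  perm_assoc : ∀ a b d : A, c a (c b d) = c (c a b) d
  perm_comm : ∀ a b d : A, c (c a b) d = c (c b a) d
  leibniz : ∀ a b d : A, s a (s b d) = s (s a b) d + s b (s a d)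
  comp1 : ∀ a b d : A, s (c a b) d = c a (s b d) + c b (s a d)
  comp2 : ∀ a b d : A, c (s a b) d = s a (c b d) - c b (s a d)
  comp3 : ∀ a b d : A, c (s a b) d = - c (s b a) d

section Tensor

variable (k A : Type*) [Field k] [AddCommGroup A] [Module k A]

/-- The flip map on `A ⊗ A`. -/
noncomputable def tauM : A ⊗[k] A →ₗ[k] A ⊗[k] A := (TensorProduct.comm k A A).toLinearMap

variable {A}

/-- `x⊗y ⊗ x'⊗y' ↦ x ⊗ (f(y⊗x') ⊗ y')` for a multiplication `f`. -/
noncomputable def term1 (f : A ⊗[k] A →ₗ[k] A) :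
    (A ⊗[k] A) ⊗[k] (A ⊗[k] A) →ₗ[k] A ⊗[k] (A ⊗[k] A) :=
  (LinearMap.lTensor A ((f.rTensor A) ∘ₗ (TensorProduct.assoc k A A A).symm.toLinearMap)) ∘ₗ
    (TensorProduct.assoc k A A (A ⊗[k] A)).toLinearMap

/-- `x⊗y ⊗ x'⊗y' ↦ x ⊗ (x' ⊗ f(y⊗y'))`. -/
noncomputable def term2 (f : A ⊗[k] A →ₗ[k] A) :
    (A ⊗[k] A) ⊗[k] (A ⊗[k] A) →ₗ[k] A ⊗[k] (A ⊗[k] A) :=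
  (TensorProduct.assoc k A A A).toLinearMap ∘ₗ (LinearMap.lTensor (A ⊗[k] A) f) ∘ₗ
    (tensorTensorTensorComm k A A A A).toLinearMap

/-- `x⊗y ⊗ x'⊗y' ↦ f(x⊗x') ⊗ (y ⊗ y')`. -/
noncomputable def term3 (f : A ⊗[k] A →ₗ[k] A) :
    (A ⊗[k] A) ⊗[k] (A ⊗[k] A) →ₗ[k] A ⊗[k] (A ⊗[k] A) :=
  (f.rTensor (A ⊗[k] A)) ∘ₗ (tensorTensorTensorComm k A A A A).toLinearMap

/-- `x⊗y ⊗ x'⊗y' ↦ f(x⊗x') ⊗ (y' ⊗ y)`. -/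
noncomputable def term4 (f : A ⊗[k] A →ₗ[k] A) :
    (A ⊗[k] A) ⊗[k] (A ⊗[k] A) →ₗ[k] A ⊗[k] (A ⊗[k] A) :=
  (LinearMap.lTensor A (tauM k A)) ∘ₗ term3 k f

/-- `x⊗y ⊗ x'⊗y' ↦ x' ⊗ (f(x⊗y') ⊗ y)`. -/
noncomputable def term5 (f : A ⊗[k] A →ₗ[k] A) :
    (A ⊗[k] A) ⊗[k] (A ⊗[k] A) →ₗ[k] A ⊗[k] (A ⊗[k] A) :=
  (term1 k (f ∘ₗ tauM k A)) ∘ₗ (TensorProduct.comm k (A ⊗[k] A) (A ⊗[k] A)).toLinearMap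

/-- `x⊗y ⊗ x'⊗y' ↦ x' ⊗ (x ⊗ f(y⊗y'))`. -/
noncomputable def term6 (f : A ⊗[k] A →ₗ[k] A) :
    (A ⊗[k] A) ⊗[k] (A ⊗[k] A) →ₗ[k] A ⊗[k] (A ⊗[k] A) :=
  (TensorProduct.assoc k A A A).toLinearMap ∘ₗ (LinearMap.lTensor (A ⊗[k] A) f) ∘ₗ
    ((tauM k A).rTensor (A ⊗[k] A)) ∘ₗ (tensorTensorTensorComm k A A A A).toLinearMap

/-- The perm Yang-Baxter map `r ⊗ r ↦ r₁₂∘r₂₃ − r₁₃∘r₂₃ + r₁₂∘r₁₃ − r₁₃∘r₁₂`. -/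
noncomputable def permYB (c : A →ₗ[k] A →ₗ[k] A) :
    (A ⊗[k] A) ⊗[k] (A ⊗[k] A) →ₗ[k] A ⊗[k] (A ⊗[k] A) :=
  term1 k (TensorProduct.lift c) - term2 k (TensorProduct.lift c) +
    term3 k (TensorProduct.lift c) - term4 k (TensorProduct.lift c)

/-- The Leibniz Yang-Baxter map `r ⊗ r ↦ r₁₂∗r₁₃ + r₁₂∗r₂₃ − r₂₃∗r₁₂ + r₂₃∗r₁₃`. -/
noncomputable def leibYB (s : A →ₗ[k] A →ₗ[k] A) :
    (A ⊗[k] A) ⊗[k] (A ⊗[k] A) →ₗ[k] A ⊗[k] (A ⊗[k] A) :=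
  term3 k (TensorProduct.lift s) + term1 k (TensorProduct.lift s) -
    term5 k (TensorProduct.lift s) + term6 k (TensorProduct.lift s)

/-- `r` is a solution of the dual pre-Poisson Yang-Baxter equation in `(A, c, s)`. -/
noncomputable def IsDPYBESolution (c s : A →ₗ[k] A →ₗ[k] A) (r : A ⊗[k] A) : Prop :=
  permYB k c (r ⊗ₜ[k] r) = 0 ∧ leibYB k s (r ⊗ₜ[k] r) = 0

/-- DP-invariance of an element of `A ⊗ A`:
`((𝔏(a)+𝔖(a))⊗id − id⊗𝔖(a))(σ) = 0` and `(id⊗𝔯(a) + (𝔯(a)−𝔩(a))⊗id)(σ) = 0`. -/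
def DPInvariant (c s : A →ₗ[k] A →ₗ[k] A) (σ : A ⊗[k] A) : Prop :=
  ∀ a : A,
    ((s a + s.flip a).rTensor A - LinearMap.lTensor A (s.flip a)) σ = 0 ∧
    (LinearMap.lTensor A (c.flip a) + (c.flip a - c a).rTensor A) σ = 0

/-- The coboundary perm comultiplication
`ν_r(a) = (id⊗𝔯(a) + (𝔯(a)−𝔩(a))⊗id)(r)`. -/
noncomputable def nuR (c : A →ₗ[k] A →ₗ[k] A) (r : A ⊗[k] A) : A →ₗ[k] A ⊗[k] A :=
  (LinearMap.applyₗ r) ∘ₗ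
    ((LinearMap.lTensorHom A) ∘ₗ c.flip + (LinearMap.rTensorHom A) ∘ₗ (c.flip - c))

/-- The coboundary Leibniz comultiplication
`ϑ_r(a) = ((𝔏(a)+𝔖(a))⊗id − id⊗𝔖(a))(r)`. -/
noncomputable def thetaR (s : A →ₗ[k] A →ₗ[k] A) (r : A ⊗[k] A) : A →ₗ[k] A ⊗[k] A :=
  (LinearMap.applyₗ r) ∘ₗ
    ((LinearMap.rTensorHom A) ∘ₗ (s + s.flip) - (LinearMap.lTensorHom A) ∘ₗ s.flip)

/-- The map `r^♯ : A* → A` characterised by `⟨r^♯(ξ), η⟩ = (ξ⊗η)(r)`. -/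
noncomputable def sharp (r : A ⊗[k] A) : Module.Dual k A →ₗ[k] A :=
  (TensorProduct.lid k A).toLinearMap ∘ₗ
    (LinearMap.applyₗ (M₂ := k ⊗[k] A) r) ∘ₗ (LinearMap.rTensorHom A)

/-- The functional `ξ ⊗ η` on `A ⊗ A`. -/
noncomputable def pairF (ξ η : Module.Dual k A) : A ⊗[k] A →ₗ[k] k :=
  (TensorProduct.lid k k).toLinearMap ∘ₗ TensorProduct.map ξ η

/-- `(τ ⊗ id)` acting on `A ⊗ (A ⊗ A)`. -/
noncomputable def T12 : A ⊗[k] (A ⊗[k] A) →ₗ[k] A ⊗[k] (A ⊗[k] A) :=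
  (TensorProduct.assoc k A A A).toLinearMap ∘ₗ ((tauM k A).rTensor A) ∘ₗ
    (TensorProduct.assoc k A A A).symm.toLinearMap

/-- `(f ⊗ id)` on triple tensors, landing in `A ⊗ (A ⊗ A)`. -/
noncomputable def rT3 (f : A →ₗ[k] A ⊗[k] A) : A ⊗[k] A →ₗ[k] A ⊗[k] (A ⊗[k] A) :=
  (TensorProduct.assoc k A A A).toLinearMap ∘ₗ (f.rTensor A)

/-- The axioms of a dual pre-Poisson bialgebra `(A, ∘, ∗, ν, ϑ)`. -/
structure IsDPPBialgebra (c s : A →ₗ[k] A →ₗ[k] A) (ν θ : A →ₗ[k] A ⊗[k] A) : Prop where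
  alg : IsDPP c s
  co_perm1 : (rT3 k ν) ∘ₗ ν = (LinearMap.lTensor A ν) ∘ₗ ν
  co_perm2 : (LinearMap.lTensor A ν) ∘ₗ ν = (T12 k) ∘ₗ (LinearMap.lTensor A ν) ∘ₗ ν
  co_leib : (rT3 k θ) ∘ₗ θ =
    (LinearMap.lTensor A θ) ∘ₗ θ + (LinearMap.lTensor A (tauM k A)) ∘ₗ (rT3 k θ) ∘ₗ θ
  co_mix1 : (LinearMap.lTensor A ν) ∘ₗ θ =
    (rT3 k θ) ∘ₗ ν + (T12 k) ∘ₗ (LinearMap.lTensor A θ) ∘ₗ ν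
  co_mix2 : (rT3 k ν) ∘ₗ θ =
    (LinearMap.lTensor A θ) ∘ₗ ν + (T12 k) ∘ₗ (LinearMap.lTensor A θ) ∘ₗ ν
  co_mix3 : (rT3 k θ) ∘ₗ ν = - ((T12 k) ∘ₗ (rT3 k θ) ∘ₗ ν)
  perm6 : ∀ a b : A, ((c.flip a).rTensor A) (ν b) = tauM k A (((c.flip b).rTensor A) (ν a))
  perm7 : ∀ a b : A, ν (c a b) =
    ((c a - c.flip a).rTensor A) (ν b) + (LinearMap.lTensor A (c.flip b)) (ν a)
  perm8 : ∀ a b : A, ν (c a b) =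
    (LinearMap.lTensor A (c a)) (ν b) +
      ((c b - c.flip b).rTensor A) (ν a - tauM k A (ν a))
  leib9 : ∀ a b : A,
    tauM k A (((s.flip b).rTensor A) (θ a)) = ((s.flip a).rTensor A) (θ b)
  leib10 : ∀ a b : A, θ (s a b) =
    (LinearMap.lTensor A (s.flip b) - (s b + s.flip b).rTensor A) (θ a + tauM k A (θ a)) +
      (LinearMap.lTensor A (s a) + (s a).rTensor A) (θ b)
  mix11 : ∀ a b : A, ν (s a b) =
    (LinearMap.lTensor A (s a) + (s a).rTensor A) (ν b) +
      ((c b - c.flip b).rTensor A - LinearMap.lTensor A (c.flip b)) (θ a + tauM k A (θ a))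
  mix12 : ∀ a b : A, θ (c a b) =
    (LinearMap.lTensor A (c a)) (θ b) + (LinearMap.lTensor A (c.flip b)) (θ a) -
      ((s a + s.flip a).rTensor A) (ν b) -
      ((s b + s.flip b).rTensor A) (ν a - tauM k A (ν a))
  mix13 : ∀ a b : A,
    (LinearMap.lTensor A (s.flip a)) (tauM k A (ν b)) = - ((c.flip b).rTensor A) (θ a)
  mix14 : ∀ a b : A, ν (s a b) =
    (LinearMap.lTensor A (c a) - (c a).rTensor A) (θ b) +
      (LinearMap.lTensor A (s.flip b) - (s b + s.flip b).rTensor A)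
        (ν a - tauM k A (ν a))
  mix15 : ∀ a b : A, θ (c a b) + tauM k A (θ (c a b)) =
    (LinearMap.lTensor A (c a)) (θ b + tauM k A (θ b)) +
      (LinearMap.lTensor A (c b)) (θ a + tauM k A (θ a)) -
      ((s a).rTensor A) (ν b - tauM k A (ν b)) -
      ((s b).rTensor A) (ν a - tauM k A (ν a))
  mix16 : ∀ a b : A, θ (c a b) =
    ((c a).rTensor A) (θ b) - (LinearMap.lTensor A (s.flip b)) (ν a - tauM k A (ν a)) +
      (LinearMap.lTensor A (s a)) (ν b) +
      ((c b - c.flip b).rTensor A) (θ a + tauM k A (θ a))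
  mix17 : ∀ a b : A, ν (s a b + s b a) =
    (LinearMap.lTensor A (s a + s.flip a)) (ν b) +
      ((s a + s.flip a).rTensor A) (tauM k A (ν b)) +
      (LinearMap.lTensor A (c b - c.flip b)) (θ a) +
      ((c b - c.flip b).rTensor A) (tauM k A (θ a))

end Tensor

section Poisson

variable {k P : Type*} [Field k] [AddCommGroup P] [Module k P]

/-- The axioms of a (not necessarily unital) Poisson algebra. -/
structure IsPoisson (m br : P →ₗ[k] P →ₗ[k] P) : Prop where
  mul_comm : ∀ p q : P, m p q = m q p
  mul_assoc : ∀ p q u : P, m p (m q u) = m (m p q) u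
  br_antisymm : ∀ p q : P, br p q = - br q p
  jacobi : ∀ p q u : P, br p (br q u) + br q (br u p) + br u (br p q) = 0
  leibniz : ∀ p q u : P, br p (m q u) = m (br p q) u + m q (br p u)

variable (k)

/-- `r` is a solution of the Poisson Yang-Baxter equation in `(P, m, br)`. -/
noncomputable def IsPoiYBESolution (m br : P →ₗ[k] P →ₗ[k] P) (r : P ⊗[k] P) : Prop :=
  (term3 k (TensorProduct.lift m) + term2 k (TensorProduct.lift m)
      - term5 k (TensorProduct.lift m)) (r ⊗ₜ[k] r) = 0 ∧
  (term3 k (TensorProduct.lift br) + term2 k (TensorProduct.lift br)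
      + term1 k (TensorProduct.lift br)) (r ⊗ₜ[k] r) = 0

/-- Poi-invariance of an element of `P ⊗ P`:
`(id⊗𝔲(p) − 𝔲(p)⊗id)(σ) = 0` and `(id⊗ad(p) + ad(p)⊗id)(σ) = 0` for all `p`. -/
def PoiInvariant (m br : P →ₗ[k] P →ₗ[k] P) (σ : P ⊗[k] P) : Prop :=
  ∀ p : P,
    (LinearMap.lTensor P (m p) - (m p).rTensor P) σ = 0 ∧
    (LinearMap.lTensor P (br p) + (br p).rTensor P) σ = 0

end Poisson

section Cobound

variable {k P : Type*} [Field k] [AddCommGroup P] [Module k P]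

/-- The coboundary infinitesimal comultiplication
`Δ_r(p) = (id⊗𝔲(p) − 𝔲(p)⊗id)(r)`. -/
noncomputable def DeltaR (m : P →ₗ[k] P →ₗ[k] P) (r : P ⊗[k] P) : P →ₗ[k] P ⊗[k] P :=
  (LinearMap.applyₗ r) ∘ₗ
    ((LinearMap.lTensorHom P) ∘ₗ m - (LinearMap.rTensorHom P) ∘ₗ m)

/-- The coboundary Lie comultiplication `δ_r(p) = (id⊗ad(p) + ad(p)⊗id)(r)`. -/
noncomputable def deltaLR (br : P →ₗ[k] P →ₗ[k] P) (r : P ⊗[k] P) : P →ₗ[k] P ⊗[k] P :=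
  (LinearMap.applyₗ r) ∘ₗ
    ((LinearMap.lTensorHom P) ∘ₗ br + (LinearMap.rTensorHom P) ∘ₗ br)

end Cobound

/-! Skew-symmetry and invariance of `ω` give `ω(a∘b, c) = ω(b, a∘c)`, from which
`ν_ω(b) = Σⱼ eⱼ ⊗ fⱼ∘b = Σⱼ (b∘eⱼ − eⱼ∘b) ⊗ fⱼ`; both are checked by pairing with `fᵢ ⊗ fⱼ`,
which detects elements of `B ⊗ B` since the `ω(fᵢ, ·)` are the coordinates for `e`.
For `r = x ⊗ y`, the term `id ⊗ 𝔯(p⊗b)` of `ν_{r̂}` then matches `x ⊗ p·y` through the first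
expansion and `(𝔯 − 𝔩)(p⊗b) ⊗ id` matches `−p·x ⊗ y` through the second, by commutativity of
the product; `ϑ_{r̂}` works the same way with antisymmetry of the bracket. -/

section DualBasis

variable {k B ι : Type*} [Field k] [AddCommGroup B] [Module k B] [Fintype ι] [DecidableEq ι]
  {ω : B →ₗ[k] B →ₗ[k] k} {e : Module.Basis ι k B} {f : ι → B}

theorem apply_dual_eq_repr (hf : ∀ i j : ι, ω (f i) (e j) = if i = j then 1 else 0)
    (x : B) (j : ι) : ω (f j) x = e.repr x j := by
  conv_lhs => rw [← e.sum_repr x, map_sum]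
  simp [hf]

theorem sum_apply_basis_mul_dual (hf : ∀ i j : ι, ω (f i) (e j) = if i = j then 1 else 0)
    (L : B →ₗ[k] k) (d : B) : ∑ j, L (e j) * ω (f j) d = L d := by
  conv_rhs => rw [← e.sum_repr d, map_sum]
  simp [apply_dual_eq_repr hf, mul_comm]

theorem pairF_flip_dual_eq_coord (hskew : ∀ b c : B, ω b c = - ω c b)
    (hf : ∀ i j : ι, ω (f i) (e j) = if i = j then 1 else 0) (i j : ι) :
    pairF k (ω.flip (f i)) (ω.flip (f j)) = (e.tensorProduct e).coord (i, j) := by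
  refine TensorProduct.ext' fun x y => ?_
  simp [pairF, hskew _ (f _), apply_dual_eq_repr hf, mul_comm]

theorem ext_pairF_flip_dual (hskew : ∀ b c : B, ω b c = - ω c b)
    (hf : ∀ i j : ι, ω (f i) (e j) = if i = j then 1 else 0) {x y : B ⊗[k] B}
    (h : ∀ i j : ι, pairF k (ω.flip (f i)) (ω.flip (f j)) x =
      pairF k (ω.flip (f i)) (ω.flip (f j)) y) : x = y := by
  refine (e.tensorProduct e).ext_elem fun ⟨i, j⟩ => ?_
  simpa [pairF_flip_dual_eq_coord hskew hf] using h i j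

end DualBasis

section QuadraticPerm

variable {k B ι : Type*} [Field k] [AddCommGroup B] [Module k B] [Fintype ι] [DecidableEq ι]
  {cB : B →ₗ[k] B →ₗ[k] B} {ω : B →ₗ[k] B →ₗ[k] k} {νω : B →ₗ[k] B ⊗[k] B}
  {e : Module.Basis ι k B} {f : ι → B}

theorem apply_mul_eq_apply_mul_left (hskew : ∀ b c : B, ω b c = - ω c b)
    (hinv : ∀ b c d : B, ω (cB b c) d = ω b (cB c d - cB d c)) (a b c : B) :
    ω (cB a b) c = ω b (cB a c) := by
  rw [hinv, hskew b, hinv]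
  simp only [map_sub]
  ring

theorem comul_eq_sum_basis_tmul (hskew : ∀ b c : B, ω b c = - ω c b)
    (hinv : ∀ b c d : B, ω (cB b c) d = ω b (cB c d - cB d c))
    (hνω : ∀ b c d : B, pairF k (ω.flip c) (ω.flip d) (νω b) = - ω b (cB c d))
    (hf : ∀ i j : ι, ω (f i) (e j) = if i = j then 1 else 0) (b : B) :
    νω b = ∑ j, e j ⊗ₜ[k] cB (f j) b := by
  refine ext_pairF_flip_dual hskew hf fun i j => ?_
  rw [hνω]
  simp [pairF, hskew (e _) (f i), hf, apply_mul_eq_apply_mul_left hskew hinv]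

theorem comul_eq_sum_tmul_dual (hskew : ∀ b c : B, ω b c = - ω c b)
    (hinv : ∀ b c d : B, ω (cB b c) d = ω b (cB c d - cB d c))
    (hνω : ∀ b c d : B, pairF k (ω.flip c) (ω.flip d) (νω b) = - ω b (cB c d))
    (hf : ∀ i j : ι, ω (f i) (e j) = if i = j then 1 else 0) (b : B) :
    νω b = ∑ j, (cB b (e j) - cB (e j) b) ⊗ₜ[k] f j := by
  refine ext_pairF_flip_dual hskew hf fun i j => ?_
  have hexpand := sum_apply_basis_mul_dual hf ((ω.flip (f i)) ∘ₗ (cB b - cB.flip b)) (f j)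
  simp only [LinearMap.comp_apply, LinearMap.sub_apply, LinearMap.flip_apply] at hexpand
  rw [hνω]
  simp only [pairF, map_sum, LinearMap.comp_apply, TensorProduct.map_tmul,
    LinearEquiv.coe_coe, TensorProduct.lid_tmul, LinearMap.flip_apply, smul_eq_mul, hexpand]
  rw [map_sub, LinearMap.sub_apply, apply_mul_eq_apply_mul_left hskew hinv, hinv,
    map_sub, sub_sub_cancel, hskew (f j), apply_mul_eq_apply_mul_left hskew hinv]

end QuadraticPerm

section Coboundary

variable {k A : Type*} [Field k] [AddCommGroup A] [Module k A]

theorem DeltaR_apply (m : A →ₗ[k] A →ₗ[k] A) (r : A ⊗[k] A) (a : A) :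
    DeltaR m r a = (LinearMap.lTensor A (m a) - (m a).rTensor A) r :=
  rfl

theorem deltaLR_apply (br : A →ₗ[k] A →ₗ[k] A) (r : A ⊗[k] A) (a : A) :
    deltaLR br r a = (LinearMap.lTensor A (br a) + (br a).rTensor A) r :=
  rfl

theorem nuR_apply (c : A →ₗ[k] A →ₗ[k] A) (r : A ⊗[k] A) (a : A) :
    nuR k c r a = (LinearMap.lTensor A (c.flip a) + (c.flip a - c a).rTensor A) r :=
  rfl

theorem thetaR_apply (s : A →ₗ[k] A →ₗ[k] A) (r : A ⊗[k] A) (a : A) :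
    thetaR k s r a = ((s a + s.flip a).rTensor A - LinearMap.lTensor A (s.flip a)) r :=
  rfl

end Coboundary

section InducedComul

variable {k P B ι : Type*} [Field k] [AddCommGroup P] [Module k P] [AddCommGroup B] [Module k B]
  [Fintype ι] {cB : B →ₗ[k] B →ₗ[k] B} {ν : B →ₗ[k] B ⊗[k] B} {e f : ι → B}

theorem tensorTensorTensorComm_tmul_comul_of_eq_sum_left
    (hν : ∀ b, ν b = ∑ j, e j ⊗ₜ[k] cB (f j) b) (x y : P) (b : B) :
    tensorTensorTensorComm k P P B B ((x ⊗ₜ[k] y) ⊗ₜ[k] ν b) =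
      ∑ j, (x ⊗ₜ[k] e j) ⊗ₜ[k] (y ⊗ₜ[k] cB (f j) b) := by
  simp [hν, TensorProduct.tmul_sum]

theorem tensorTensorTensorComm_tmul_comul_of_eq_sum_right
    (hν : ∀ b, ν b = ∑ j, (cB b (e j) - cB (e j) b) ⊗ₜ[k] f j) (x y : P) (b : B) :
    tensorTensorTensorComm k P P B B ((x ⊗ₜ[k] y) ⊗ₜ[k] ν b) =
      ∑ j, (x ⊗ₜ[k] (cB b (e j) - cB (e j) b)) ⊗ₜ[k] (y ⊗ₜ[k] f j) := by
  simp [hν, TensorProduct.tmul_sum]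

theorem comp_map_DeltaR_eq_nuR {m : P →ₗ[k] P →ₗ[k] P} (hm : ∀ p q : P, m p q = m q p)
    {circ : P ⊗[k] B →ₗ[k] P ⊗[k] B →ₗ[k] P ⊗[k] B}
    (hcirc : ∀ (p q : P) (b c : B), circ (p ⊗ₜ[k] b) (q ⊗ₜ[k] c) = m p q ⊗ₜ[k] cB b c)
    (hν₁ : ∀ b, ν b = ∑ j, e j ⊗ₜ[k] cB (f j) b)
    (hν₂ : ∀ b, ν b = ∑ j, (cB b (e j) - cB (e j) b) ⊗ₜ[k] f j) (r : P ⊗[k] P) :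
    (tensorTensorTensorComm k P P B B).toLinearMap ∘ₗ TensorProduct.map (DeltaR m r) ν =
      nuR k circ ((∑ j, TensorProduct.map
        ((TensorProduct.mk k P B).flip (e j)) ((TensorProduct.mk k P B).flip (f j))) r) := by
  refine TensorProduct.ext' fun p b => ?_
  simp only [LinearMap.comp_apply, TensorProduct.map_tmul, LinearEquiv.coe_coe, DeltaR_apply,
    nuR_apply]
  induction r using TensorProduct.induction_on with
  | zero => simp
  | tmul x y =>
    rw [LinearMap.sub_apply, LinearMap.lTensor_tmul, LinearMap.rTensor_tmul,
      TensorProduct.sub_tmul, map_sub, tensorTensorTensorComm_tmul_comul_of_eq_sum_left hν₁,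
      tensorTensorTensorComm_tmul_comul_of_eq_sum_right hν₂]
    simp only [hm p, tmul_sub, sub_tmul, Finset.sum_sub_distrib, rTensor_sub, coe_sum,
      Finset.sum_apply, map_tmul, flip_apply, mk_apply, map_sum, LinearMap.add_apply, lTensor_tmul,
      hcirc, LinearMap.sub_apply, rTensor_tmul, Finset.sum_add_distrib]
    abel
  | add r₁ r₂ h₁ h₂ => simp only [map_add, TensorProduct.add_tmul, h₁, h₂]

theorem comp_map_deltaLR_eq_thetaR {br : P →ₗ[k] P →ₗ[k] P}
    (hbr : ∀ p q : P, br p q = - br q p) {star : P ⊗[k] B →ₗ[k] P ⊗[k] B →ₗ[k] P ⊗[k] B}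
    (hstar : ∀ (p q : P) (b c : B), star (p ⊗ₜ[k] b) (q ⊗ₜ[k] c) = br p q ⊗ₜ[k] cB b c)
    (hν₁ : ∀ b, ν b = ∑ j, e j ⊗ₜ[k] cB (f j) b)
    (hν₂ : ∀ b, ν b = ∑ j, (cB b (e j) - cB (e j) b) ⊗ₜ[k] f j) (r : P ⊗[k] P) :
    (tensorTensorTensorComm k P P B B).toLinearMap ∘ₗ TensorProduct.map (deltaLR br r) ν =
      thetaR k star ((∑ j, TensorProduct.map
        ((TensorProduct.mk k P B).flip (e j)) ((TensorProduct.mk k P B).flip (f j))) r) := by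
  refine TensorProduct.ext' fun p b => ?_
  simp only [LinearMap.comp_apply, TensorProduct.map_tmul, LinearEquiv.coe_coe, deltaLR_apply,
    thetaR_apply]
  induction r using TensorProduct.induction_on with
  | zero => simp
  | tmul x y =>
    rw [LinearMap.add_apply, LinearMap.lTensor_tmul, LinearMap.rTensor_tmul,
      TensorProduct.add_tmul, map_add, tensorTensorTensorComm_tmul_comul_of_eq_sum_left hν₁,
      tensorTensorTensorComm_tmul_comul_of_eq_sum_right hν₂]
    simp only [tmul_sub, sub_tmul, Finset.sum_sub_distrib, rTensor_add, coe_sum, Finset.sum_apply,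
      map_tmul, flip_apply, mk_apply, map_sum, LinearMap.sub_apply, LinearMap.add_apply,
      rTensor_tmul, hstar, hbr _ p, neg_tmul, lTensor_tmul, tmul_neg, sub_neg_eq_add,
      Finset.sum_add_distrib, Finset.sum_neg_distrib]
    abel
  | add r₁ r₂ h₁ h₂ => simp only [map_add, TensorProduct.add_tmul, h₁, h₂]

end InducedComul

theorem stmt17_general {k P B : Type*} [Field k]
    [AddCommGroup P] [Module k P]
    [AddCommGroup B] [Module k B]
    (m br : P →ₗ[k] P →ₗ[k] P) (hP : IsPoisson m br)
    (cB : B →ₗ[k] B →ₗ[k] B)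
    (ω : B →ₗ[k] B →ₗ[k] k)
    (hskew : ∀ b c : B, ω b c = - ω c b)
    (hinv : ∀ b c d : B, ω (cB b c) d = ω b (cB c d - cB d c))
    (νω : B →ₗ[k] B ⊗[k] B)
    (hνω : ∀ b c d : B, pairF k (ω.flip c) (ω.flip d) (νω b) = - ω b (cB c d))
    {ι : Type*} [Fintype ι] [DecidableEq ι]
    (e : Module.Basis ι k B) (f : ι → B)
    (hf : ∀ i j : ι, ω (f i) (e j) = if i = j then 1 else 0)
    (circ star : P ⊗[k] B →ₗ[k] P ⊗[k] B →ₗ[k] P ⊗[k] B)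
    (hcirc : ∀ (p q : P) (b c : B),
      circ (p ⊗ₜ[k] b) (q ⊗ₜ[k] c) = (m p q) ⊗ₜ[k] (cB b c))
    (hstar : ∀ (p q : P) (b c : B),
      star (p ⊗ₜ[k] b) (q ⊗ₜ[k] c) = (br p q) ⊗ₜ[k] (cB b c))
    (r : P ⊗[k] P)
    (rhat : (P ⊗[k] B) ⊗[k] (P ⊗[k] B))
    (hrhat : rhat = (∑ j : ι, TensorProduct.map
      ((TensorProduct.mk k P B).flip (e j)) ((TensorProduct.mk k P B).flip (f j))) r) :
    (tensorTensorTensorComm k P P B B).toLinearMap ∘ₗ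
        TensorProduct.map (DeltaR m r) νω = nuR k circ rhat ∧
    (tensorTensorTensorComm k P P B B).toLinearMap ∘ₗ
        TensorProduct.map (deltaLR br r) νω = thetaR k star rhat := by
  subst hrhat
  have hν₁ := comul_eq_sum_basis_tmul hskew hinv hνω hf
  have hν₂ := comul_eq_sum_tmul_dual hskew hinv hνω hf
  exact ⟨comp_map_DeltaR_eq_nuR hP.mul_comm hcirc hν₁ hν₂ r,
    comp_map_deltaLR_eq_thetaR hP.br_antisymm hstar hν₁ hν₂ r⟩

/-- For a finite-dimensional Poisson algebra `(P, ·, [−,−])`, `r ∈ P⊗P`, and a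
finite-dimensional quadratic perm algebra `(B, ∘_B, ω)` with induced completed perm
comultiplication `ν_ω`, the comultiplications `ν = Δ_r • ν_ω` and `ϑ = δ_r • ν_ω` on
`P⊗B` coincide with the coboundary maps `ν_{r̂}`, `ϑ_{r̂}` of the induced DPP algebra
`(P⊗B, ∘, ∗)` associated with `r̂ = Σ_{i,j}(xᵢ⊗eⱼ)⊗(yᵢ⊗fⱼ)`. -/
theorem stmt17 {k P B : Type*} [Field k] [CharZero k]
    [AddCommGroup P] [Module k P] [FiniteDimensional k P]
    [AddCommGroup B] [Module k B] [FiniteDimensional k B]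
    (m br : P →ₗ[k] P →ₗ[k] P) (hP : IsPoisson m br)
    (cB : B →ₗ[k] B →ₗ[k] B)
    (hB : ∀ b c d : B, cB b (cB c d) = cB (cB b c) d ∧ cB (cB b c) d = cB (cB c b) d)
    (ω : B →ₗ[k] B →ₗ[k] k)
    (hnd : ∀ b : B, (∀ c : B, ω b c = 0) → b = 0)
    (hskew : ∀ b c : B, ω b c = - ω c b)
    (hinv : ∀ b c d : B, ω (cB b c) d = ω b (cB c d - cB d c))
    (νω : B →ₗ[k] B ⊗[k] B)
    (hνω : ∀ b c d : B, pairF k (ω.flip c) (ω.flip d) (νω b) = - ω b (cB c d))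
    {ι : Type*} [Fintype ι] [DecidableEq ι]
    (e : Module.Basis ι k B) (f : ι → B)
    (hf : ∀ i j : ι, ω (f i) (e j) = if i = j then 1 else 0)
    (circ star : P ⊗[k] B →ₗ[k] P ⊗[k] B →ₗ[k] P ⊗[k] B)
    (hcirc : ∀ (p q : P) (b c : B),
      circ (p ⊗ₜ[k] b) (q ⊗ₜ[k] c) = (m p q) ⊗ₜ[k] (cB b c))
    (hstar : ∀ (p q : P) (b c : B),
      star (p ⊗ₜ[k] b) (q ⊗ₜ[k] c) = (br p q) ⊗ₜ[k] (cB b c))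
    (r : P ⊗[k] P)
    (rhat : (P ⊗[k] B) ⊗[k] (P ⊗[k] B))
    (hrhat : rhat = (∑ j : ι, TensorProduct.map
      ((TensorProduct.mk k P B).flip (e j)) ((TensorProduct.mk k P B).flip (f j))) r) :
    (tensorTensorTensorComm k P P B B).toLinearMap ∘ₗ
        TensorProduct.map (DeltaR m r) νω = nuR k circ rhat ∧
    (tensorTensorTensorComm k P P B B).toLinearMap ∘ₗ
        TensorProduct.map (deltaLR br r) νω = thetaR k star rhat :=
  stmt17_general m br hP cB ω hskew hinv νω hνω e f hf circ star hcirc hstar r rhat hrhat
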